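/- arXiv:0911.2602 — 3 statements merged into one kernel-verified Lean document; each statement's English description precedes it below -/
import Mathlib

section
/- On the ad_𝔥-module 𝔪 ≅ W ⊗ ℝ², the 2-form ω_𝔪 = g^W ⊗ ω_0 (where g^W is the induced metric on W of signature (p,q) and ω_0 = f_1 ∧ f_2 the standard area form on ℝ²) is non-degenerate and invariant under the isotropy representation of 𝔥 = 𝔰𝔬(W) + ℝe_0, where 𝔰𝔬(W) acts on the first factor and e_0 acts on ℝ² by the nilpotent matrix with −1 in the (2,1)-entry. -/
/-!
STATEMENT 9: On the ad_𝔥-module 𝔪 ≅ W ⊗ ℝ², the 2-form ω_𝔪 = g^W ⊗ ω₀ (g^W the induced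
metric of signature (p,q) on W, ω₀ = f₁ ∧ f₂ the standard area form on ℝ²) is
non-degenerate and invariant under the isotropy representation of 𝔥 = 𝔰𝔬(W) + ℝe₀,
where 𝔰𝔬(W) acts on the first factor and e₀ acts on ℝ² by the nilpotent matrix with −1
in the (2,1)-entry, i.e. λe₀ : (u,w) ↦ (0, −λu).

Here 𝔪 = U ⊕ W ≅ W ⊗ ℝ², with (u,w) = u ⊗ f₁ + w ⊗ f₂, so that
ω_𝔪((u,w),(u',w')) = g^W(u,w') − g^W(w,u').
-/

open Matrix
open scoped BigOperators

noncomputable section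

/-- The metric of signature (p,q) on W. -/
def gW (p q : ℕ) (x y : Fin (p + q) → ℝ) : ℝ :=
  ∑ i : Fin (p + q), (if (i : ℕ) < p then (1 : ℝ) else -1) * x i * y i

/-- ω_𝔪 = g^W ⊗ ω₀ on 𝔪 = W ⊗ ℝ² ≅ W × W. -/
def omegaM (p q : ℕ) (z z' : (Fin (p + q) → ℝ) × (Fin (p + q) → ℝ)) : ℝ :=
  gW p q z.1 z'.2 - gW p q z.2 z'.1

def signatureMatrix (p q : ℕ) : Matrix (Fin (p + q)) (Fin (p + q)) ℝ :=
  diagonal fun i => if (i : ℕ) < p then 1 else -1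

lemma gW_eq_dotProduct_mulVec (p q : ℕ) (x y : Fin (p + q) → ℝ) :
    gW p q x y = x ⬝ᵥ signatureMatrix p q *ᵥ y := by
  simp only [gW, signatureMatrix, mulVec_diagonal, dotProduct]
  exact Finset.sum_congr rfl fun i _ => by ring

lemma det_signatureMatrix_ne_zero (p q : ℕ) : (signatureMatrix p q).det ≠ 0 := by
  rw [signatureMatrix, det_diagonal, Finset.prod_ne_zero_iff]
  intro i _
  split_ifs <;> norm_num

lemma eq_zero_of_forall_gW_eq_zero {p q : ℕ} {x : Fin (p + q) → ℝ}
    (hx : ∀ y, gW p q x y = 0) : x = 0 :=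
  (nondegenerate_of_det_ne_zero (det_signatureMatrix_ne_zero p q)).eq_zero_of_ortho
    fun y => gW_eq_dotProduct_mulVec p q x y ▸ hx y

@[simp]
lemma gW_zero_left (p q : ℕ) (y : Fin (p + q) → ℝ) : gW p q 0 y = 0 := by
  rw [gW_eq_dotProduct_mulVec, zero_dotProduct]

@[simp]
lemma gW_zero_right (p q : ℕ) (x : Fin (p + q) → ℝ) : gW p q x 0 = 0 := by
  rw [gW_eq_dotProduct_mulVec, mulVec_zero, dotProduct_zero]

@[simp]
lemma gW_smul_left (p q : ℕ) (c : ℝ) (x y : Fin (p + q) → ℝ) :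
    gW p q (c • x) y = c * gW p q x y := by
  rw [gW_eq_dotProduct_mulVec, gW_eq_dotProduct_mulVec, smul_dotProduct, smul_eq_mul]

@[simp]
lemma gW_smul_right (p q : ℕ) (c : ℝ) (x y : Fin (p + q) → ℝ) :
    gW p q x (c • y) = c * gW p q x y := by
  rw [gW_eq_dotProduct_mulVec, gW_eq_dotProduct_mulVec, mulVec_smul, dotProduct_smul,
    smul_eq_mul]

lemma eq_zero_of_forall_omegaM_eq_zero {p q : ℕ}
    {z : (Fin (p + q) → ℝ) × (Fin (p + q) → ℝ)}
    (hz : ∀ z', omegaM p q z z' = 0) : z = 0 := by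
  have hz₁ : z.1 = 0 := eq_zero_of_forall_gW_eq_zero fun y => by
    simpa [omegaM] using hz (0, y)
  have hz₂ : z.2 = 0 := eq_zero_of_forall_gW_eq_zero fun y => by
    simpa [omegaM] using hz (y, 0)
  exact Prod.ext hz₁ hz₂

lemma omegaM_mulVec_add_omegaM_mulVec_eq_zero {p q : ℕ}
    {A : Matrix (Fin (p + q)) (Fin (p + q)) ℝ}
    (hA : ∀ x y, gW p q (A *ᵥ x) y + gW p q x (A *ᵥ y) = 0)
    (z z' : (Fin (p + q) → ℝ) × (Fin (p + q) → ℝ)) :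
    omegaM p q (A *ᵥ z.1, A *ᵥ z.2) z' + omegaM p q z (A *ᵥ z'.1, A *ᵥ z'.2) = 0 := by
  have h₁ := hA z.1 z'.2
  have h₂ := hA z.2 z'.1
  simp only [omegaM]
  linarith

lemma omegaM_nilpotent_add_omegaM_nilpotent_eq_zero (p q : ℕ) (lam : ℝ)
    (z z' : (Fin (p + q) → ℝ) × (Fin (p + q) → ℝ)) :
    omegaM p q (0, (-lam) • z.1) z' + omegaM p q z (0, (-lam) • z'.1) = 0 := by
  simp only [omegaM, gW_zero_left, gW_zero_right, gW_smul_left, gW_smul_right]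
  ring

theorem omegaM_nondegenerate_and_invariant (p q : ℕ) :
    -- non-degeneracy
    (∀ z : (Fin (p + q) → ℝ) × (Fin (p + q) → ℝ),
      (∀ z', omegaM p q z z' = 0) → z = 0) ∧
    -- invariance under 𝔰𝔬(W) acting on the first tensor factor
    (∀ A : Matrix (Fin (p + q)) (Fin (p + q)) ℝ,
      (∀ x y, gW p q (A.mulVec x) y + gW p q x (A.mulVec y) = 0) →
      ∀ z z' : (Fin (p + q) → ℝ) × (Fin (p + q) → ℝ),
        omegaM p q (A.mulVec z.1, A.mulVec z.2) z'
          + omegaM p q z (A.mulVec z'.1, A.mulVec z'.2) = 0) ∧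
    -- invariance under λe₀ acting on ℝ² by the strictly lower-triangular matrix −λ
    (∀ lam : ℝ, ∀ z z' : (Fin (p + q) → ℝ) × (Fin (p + q) → ℝ),
      omegaM p q ((0 : Fin (p + q) → ℝ), (-lam) • z.1) z'
        + omegaM p q z ((0 : Fin (p + q) → ℝ), (-lam) • z'.1) = 0) :=
  ⟨fun _ => eq_zero_of_forall_omegaM_eq_zero,
    fun _ => omegaM_mulVec_add_omegaM_mulVec_eq_zero,
    omegaM_nilpotent_add_omegaM_nilpotent_eq_zero p q⟩
end
end

section
/- With H^ε and (V,g_V) as above and dim V > 2, every SO(H^ε) × SO(V)-equivariant endomorphism I of W^ε = H^ε ⊗ V with I² = ±Id and I ≠ ±Id equals ±(I_H ⊗ 1); in particular I² = −ε·Id, so W^+ carries (up to sign) a unique invariant complex structure and W^- a unique invariant para-complex structure. -/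
/-!
A rotation (ε = +1) or boost (ε = −1) `R_t` of `H^ε`, and likewise of a coordinate plane of `V`,
lies on a continuous curve of isometries through `1`, hence in the identity component. Since
`R_t − R_{−t}` is a nonzero multiple of the infinitesimal generator, an invariant `I` commutes with
`I_H ⊗ 1` and with the generators `E_ji − s_i s_j E_ij` of `so(V)`. For `m > 2` every pair of indices
has a third index beside it, and commuting with these generators forces each `V`-block of `I` to be
a scalar. Hence `I = α + γ (I_H ⊗ 1)`, and `I² = ±1`, `I ≠ ±1` leave only `α = 0`, `γ = ±1`.
-/

open Matrix
open scoped BigOperators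

noncomputable section

def gH (e : ℝ) (a b : Fin 2 → ℝ) : ℝ := a 0 * b 0 + e * (a 1 * b 1)

def gV {m : ℕ} (s : Fin m → ℝ) (x y : Fin m → ℝ) : ℝ := ∑ i, s i * x i * y i

def SOH (e : ℝ) : Set (Matrix (Fin 2) (Fin 2) ℝ) :=
  connectedComponentIn {M | ∀ a b, gH e (M.mulVec a) (M.mulVec b) = gH e a b} 1

def SOV {m : ℕ} (s : Fin m → ℝ) : Set (Matrix (Fin m) (Fin m) ℝ) :=
  connectedComponentIn {A | ∀ x y, gV s (A.mulVec x) (A.mulVec y) = gV s x y} 1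

def tact {m : ℕ} (M : Matrix (Fin 2) (Fin 2) ℝ) (A : Matrix (Fin m) (Fin m) ℝ)
    (z : (Fin m → ℝ) × (Fin m → ℝ)) : (Fin m → ℝ) × (Fin m → ℝ) :=
  (M 0 0 • A.mulVec z.1 + M 0 1 • A.mulVec z.2,
   M 1 0 • A.mulVec z.1 + M 1 1 • A.mulVec z.2)

lemma mem_connectedComponentIn_of_continuous {X : Type*} [TopologicalSpace X] {F : Set X}
    {γ : ℝ → X} (hγ : Continuous γ) (hF : ∀ t, γ t ∈ F) (t : ℝ) :
    γ t ∈ connectedComponentIn F (γ 0) :=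
  (isPreconnected_range hγ).subset_connectedComponentIn (Set.mem_range_self 0)
    (Set.range_subset_iff.2 hF) (Set.mem_range_self t)

lemma map_apply_of_sub_eq_smul {K V : Type*} [DivisionRing K] [AddCommGroup V] [Module K V]
    (a : V →ₗ[K] V) {P Q L : V → V} {r : K} (hr : r ≠ 0)
    (hPQ : ∀ x, P x - Q x = r • L x) (hP : ∀ x, a (P x) = P (a x))
    (hQ : ∀ x, a (Q x) = Q (a x)) (x : V) :
    a (L x) = L (a x) := by
  apply smul_right_injective V hr
  simp only [← map_smul, ← hPQ, map_sub, hP, hQ]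

lemma exists_conic_param {c : ℝ} (hc : c = 1 ∨ c = -1) :
    ∃ f g : ℝ → ℝ, Continuous f ∧ Continuous g ∧ f 0 = 1 ∧ g 0 = 0 ∧
      (∀ t, f t ^ 2 + c * g t ^ 2 = 1) ∧ ∃ t, g t ≠ 0 := by
  rcases hc with rfl | rfl
  · refine ⟨Real.cos, Real.sin, Real.continuous_cos, Real.continuous_sin, Real.cos_zero,
      Real.sin_zero, fun t => by linear_combination Real.cos_sq_add_sin_sq t, Real.pi / 2, ?_⟩
    simp
  · refine ⟨Real.cosh, Real.sinh, Real.continuous_cosh, Real.continuous_sinh, Real.cosh_zero,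
      Real.sinh_zero, fun t => by linear_combination Real.cosh_sq_sub_sinh_sq t, 1, ?_⟩
    simp

section PlaneRotation

variable {n : ℕ} {c F G : ℝ} {i j k : Fin n}

def planeGen (c : ℝ) (i j : Fin n) : Matrix (Fin n) (Fin n) ℝ :=
  single j i 1 - c • single i j 1

/-- For `c = 1` a rotation and for `c = -1` a boost in the `(i, j)`-plane, with `F`, `G` in the
roles of `cos`, `sin` (resp. `cosh`, `sinh`). -/
def planeRot (c : ℝ) (i j : Fin n) (F G : ℝ) : Matrix (Fin n) (Fin n) ℝ :=
  1 + (F - 1) • (single i i 1 + single j j 1) + G • planeGen c i j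

lemma planeRot_one_zero : planeRot c i j 1 0 = 1 := by
  simp [planeRot]

lemma planeRot_sub_planeRot_neg :
    planeRot c i j F G - planeRot c i j F (-G) = (2 * G) • planeGen c i j := by
  unfold planeRot
  module

lemma planeGen_mulVec_apply (hij : i ≠ j) (x : Fin n → ℝ) (k : Fin n) :
    (planeGen c i j *ᵥ x) k = if k = i then -c * x j else if k = j then x i else 0 := by
  simp only [planeGen, sub_mulVec, smul_mulVec, single_mulVec, Pi.sub_apply, Pi.smul_apply,
    Function.update_apply, Pi.zero_apply, smul_eq_mul, one_mul]
  split_ifs <;> simp_all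

lemma planeRot_mulVec_apply (hij : i ≠ j) (x : Fin n → ℝ) (k : Fin n) :
    (planeRot c i j F G *ᵥ x) k =
      if k = i then F * x i - c * G * x j else if k = j then G * x i + F * x j else x k := by
  simp only [planeRot, add_mulVec, smul_mulVec, one_mulVec, single_mulVec, Pi.add_apply,
    Pi.smul_apply, Function.update_apply, Pi.zero_apply, smul_eq_mul, one_mul,
    planeGen_mulVec_apply hij]
  split_ifs <;> simp_all <;> ring

lemma gV_planeRot {w : Fin n → ℝ} (hij : i ≠ j) (hw : w j = c * w i)
    (hFG : F ^ 2 + c * G ^ 2 = 1) (x y : Fin n → ℝ) :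
    gV w (planeRot c i j F G *ᵥ x) (planeRot c i j F G *ᵥ y) = gV w x y := by
  have split : ∀ u v : Fin n → ℝ, gV w u v = w i * u i * v i + w j * u j * v j +
      ∑ k ∈ ({i, j} : Finset (Fin n))ᶜ, w k * u k * v k := fun u v => by
    rw [gV, ← Finset.sum_compl_add_sum, Finset.sum_pair hij]
    ring
  have off : ∀ k ∈ ({i, j} : Finset (Fin n))ᶜ, w k * (planeRot c i j F G *ᵥ x) k *
      (planeRot c i j F G *ᵥ y) k = w k * x k * y k := fun k hk => by
    simp only [Finset.mem_compl, Finset.mem_insert, Finset.mem_singleton, not_or] at hk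
    simp only [planeRot_mulVec_apply hij, hk.1, hk.2, if_false]
  rw [split, split x y, Finset.sum_congr rfl off]
  simp only [planeRot_mulVec_apply hij, ↓reduceIte, if_neg hij.symm, hw]
  linear_combination w i * (x i * y i + c * x j * y j) * hFG

lemma exists_planeRot_mem_SOV {w : Fin n → ℝ} (hc : c = 1 ∨ c = -1) (hij : i ≠ j)
    (hw : w j = c * w i) :
    ∃ F G, G ≠ 0 ∧ planeRot c i j F G ∈ SOV w ∧ planeRot c i j F (-G) ∈ SOV w := by
  obtain ⟨f, g, hf, hg, hf0, hg0, hfg, t, ht⟩ := exists_conic_param hc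
  have mem : ∀ g : ℝ → ℝ, Continuous g → g 0 = 0 → (∀ t, f t ^ 2 + c * g t ^ 2 = 1) →
      planeRot c i j (f t) (g t) ∈ SOV w := fun g hg hg0 hfg => by
    have := mem_connectedComponentIn_of_continuous
      (F := {A | ∀ x y, gV w (A *ᵥ x) (A *ᵥ y) = gV w x y})
      (γ := fun t => planeRot c i j (f t) (g t)) (by unfold planeRot; fun_prop)
      (fun t => gV_planeRot hij hw (hfg t)) t
    rwa [hf0, hg0, planeRot_one_zero] at this
  exact ⟨f t, g t, ht, mem g hg hg0 hfg, mem (-g ·) hg.neg (by simp [hg0]) (by simpa using hfg)⟩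

lemma map_planeGen_mulVec_of_SOV {w : Fin n → ℝ} (hc : c = 1 ∨ c = -1) (hij : i ≠ j)
    (hw : w j = c * w i) {a : Module.End ℝ (Fin n → ℝ)}
    (ha : ∀ A ∈ SOV w, ∀ x, a (A *ᵥ x) = A *ᵥ a x) (x : Fin n → ℝ) :
    a (planeGen c i j *ᵥ x) = planeGen c i j *ᵥ a x := by
  obtain ⟨F, G, hG, hpos, hneg⟩ := exists_planeRot_mem_SOV hc hij hw
  refine map_apply_of_sub_eq_smul a (mul_ne_zero two_ne_zero hG) (fun x => ?_) (ha _ hpos)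
    (ha _ hneg) x
  rw [← sub_mulVec, planeRot_sub_planeRot_neg, smul_mulVec]

lemma planeGen_mulVec_single_of_ne (hij : i ≠ j) (hki : k ≠ i) (hkj : k ≠ j) :
    planeGen c i j *ᵥ Pi.single k 1 = 0 := by
  ext l
  rw [planeGen_mulVec_apply hij]
  simp [hki.symm, hkj.symm]

lemma planeGen_mulVec_single_self (hij : i ≠ j) :
    planeGen c i j *ᵥ Pi.single i 1 = Pi.single j 1 := by
  ext l
  rw [planeGen_mulVec_apply hij]
  by_cases hl : l = j <;> simp [hl, hij.symm]

lemma exists_eq_smul_id_of_map_planeGen (hn : 2 < n) (c : Fin n → Fin n → ℝ)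
    (a : Module.End ℝ (Fin n → ℝ))
    (ha : ∀ i j, i ≠ j → ∀ x, a (planeGen (c i j) i j *ᵥ x) = planeGen (c i j) i j *ᵥ a x) :
    ∃ α : ℝ, a = α • LinearMap.id := by
  have key : ∀ i j, i ≠ j → ∀ x, a (planeGen (c i j) i j *ᵥ x) j = a x i := fun i j hij x => by
    rw [ha i j hij, planeGen_mulVec_apply hij, if_neg hij.symm, if_pos rfl]
  have off : ∀ i k, i ≠ k → a (Pi.single k 1) i = 0 := fun i k hik => by
    obtain ⟨j, hji, hjk⟩ := Fin.exists_ne_and_ne_of_two_lt i k hn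
    rw [← key i j hji.symm, planeGen_mulVec_single_of_ne hji.symm hik.symm hjk.symm, map_zero,
      Pi.zero_apply]
  have diag : ∀ i j, i ≠ j → a (Pi.single j 1) j = a (Pi.single i 1) i := fun i j hij => by
    rw [← key i j hij, planeGen_mulVec_single_self hij]
  let i₀ : Fin n := ⟨0, by omega⟩
  refine ⟨a (Pi.single i₀ 1) i₀, (Pi.basisFun ℝ (Fin n)).ext fun k => funext fun l => ?_⟩
  rcases eq_or_ne l k with rfl | hlk
  · rcases eq_or_ne l i₀ with rfl | hl
    · simp
    · simp [diag i₀ l hl.symm]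
  · simp [off l k hlk, hlk]

lemma exists_eq_smul_id_of_map_SOV (hn : 2 < n) {s : Fin n → ℝ} (hs : ∀ i, s i = 1 ∨ s i = -1)
    (a : Module.End ℝ (Fin n → ℝ)) (ha : ∀ A ∈ SOV s, ∀ x, a (A *ᵥ x) = A *ᵥ a x) :
    ∃ α : ℝ, a = α • LinearMap.id := by
  refine exists_eq_smul_id_of_map_planeGen hn (fun i j => s i * s j) a
    fun i j hij => map_planeGen_mulVec_of_SOV ?_ hij ?_ ha
  · rcases hs i with h | h <;> rcases hs j with h' | h' <;> simp [h, h']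
  · rcases hs i with h | h <;> simp [h]

end PlaneRotation

lemma SOH_eq_SOV (e : ℝ) : SOH e = SOV ![1, e] := by
  have : ∀ a b, gH e a b = gV ![1, e] a b := fun a b => by
    simp [gH, gV, Fin.sum_univ_two, mul_assoc]
  simp only [SOH, SOV, this]

lemma one_mem_SOV {n : ℕ} (s : Fin n → ℝ) : (1 : Matrix (Fin n) (Fin n) ℝ) ∈ SOV s :=
  mem_connectedComponentIn fun x y => by rw [one_mulVec, one_mulVec]

lemma one_mem_SOH (e : ℝ) : (1 : Matrix (Fin 2) (Fin 2) ℝ) ∈ SOH e :=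
  SOH_eq_SOV e ▸ one_mem_SOV _

section Tensor

variable {V : Type*} [AddCommGroup V] [Module ℝ V]

/-- `I_H ⊗ 1` on `H^ε ⊗ V ≅ V × V`. -/
def ihTensorOne (e : ℝ) : Module.End ℝ (V × V) :=
  ((-e) • LinearMap.snd ℝ V V).prod (LinearMap.fst ℝ V V)

@[simp]
lemma ihTensorOne_apply (e : ℝ) (z : V × V) : ihTensorOne e z = ((-e) • z.2, z.1) := rfl

end Tensor

lemma tact_one_left {m : ℕ} (A : Matrix (Fin m) (Fin m) ℝ) (z : (Fin m → ℝ) × (Fin m → ℝ)) :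
    tact 1 A z = (A *ᵥ z.1, A *ᵥ z.2) := by
  simp [tact]

lemma planeRot_fin_two (e F G : ℝ) : planeRot e 0 1 F G = !![F, -(e * G); G, F] := by
  ext i j
  fin_cases i <;> fin_cases j <;> simp [planeRot, planeGen, one_apply, mul_comm]

lemma tact_planeRot_sub_tact_planeRot_neg {m : ℕ} (e F G : ℝ) (z : (Fin m → ℝ) × (Fin m → ℝ)) :
    tact (planeRot e 0 1 F G) 1 z - tact (planeRot e 0 1 F (-G)) 1 z =
      (2 * G) • ihTensorOne e z := by
  simp only [tact, planeRot_fin_two, one_mulVec, of_apply, cons_val', cons_val_zero, cons_val_one,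
    empty_val', cons_val_fin_one, ihTensorOne_apply]
  refine Prod.ext ?_ ?_ <;> simp only [Prod.fst_sub, Prod.snd_sub, Prod.smul_fst, Prod.smul_snd]
    <;> module

lemma map_ihTensorOne_of_SOH {m : ℕ} {e : ℝ} (he : e = 1 ∨ e = -1)
    (T : Module.End ℝ ((Fin m → ℝ) × (Fin m → ℝ)))
    (hT : ∀ M ∈ SOH e, ∀ z, T (tact M 1 z) = tact M 1 (T z)) (z : (Fin m → ℝ) × (Fin m → ℝ)) :
    T (ihTensorOne e z) = ihTensorOne e (T z) := by
  obtain ⟨F, G, hG, hpos, hneg⟩ :=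
    exists_planeRot_mem_SOV (w := ![1, e]) (i := 0) (j := 1) he zero_ne_one (by simp)
  rw [← SOH_eq_SOV] at hpos hneg
  exact map_apply_of_sub_eq_smul T (mul_ne_zero two_ne_zero hG)
    (tact_planeRot_sub_tact_planeRot_neg e F G) (hT _ hpos) (hT _ hneg) z

lemma exists_eq_smul_add_smul_ihTensorOne {m : ℕ} (hm : 2 < m) {s : Fin m → ℝ}
    (hs : ∀ i, s i = 1 ∨ s i = -1) (e : ℝ) (T : Module.End ℝ ((Fin m → ℝ) × (Fin m → ℝ)))
    (hA : ∀ A ∈ SOV s, ∀ z, T (tact 1 A z) = tact 1 A (T z))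
    (hJ : ∀ z, T (ihTensorOne e z) = ihTensorOne e (T z)) :
    ∃ α γ : ℝ, ∀ z, T z = α • z + γ • ihTensorOne e z := by
  have hblock : ∀ A ∈ SOV s, ∀ x, T (A *ᵥ x, 0) = (A *ᵥ (T (x, 0)).1, A *ᵥ (T (x, 0)).2) :=
    fun A hAs x => by simpa [tact_one_left] using hA A hAs (x, 0)
  obtain ⟨α, hα⟩ := exists_eq_smul_id_of_map_SOV hm hs (LinearMap.fst ℝ _ _ ∘ₗ T ∘ₗ
    LinearMap.inl ℝ _ _) fun A hA x => by simp [hblock A hA x]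
  obtain ⟨γ, hγ⟩ := exists_eq_smul_id_of_map_SOV hm hs (LinearMap.snd ℝ _ _ ∘ₗ T ∘ₗ
    LinearMap.inl ℝ _ _) fun A hA x => by simp [hblock A hA x]
  have hinl : ∀ x, T (x, 0) = (α • x, γ • x) := fun x =>
    Prod.ext (LinearMap.congr_fun hα x) (LinearMap.congr_fun hγ x)
  refine ⟨α, γ, fun z => ?_⟩
  have hinr : T (0, z.2) = ihTensorOne e (T (z.2, 0)) := by
    simpa using hJ (z.2, 0)
  calc T z = T (z.1, 0) + T (0, z.2) := by rw [← map_add, Prod.mk_add_mk, add_zero, zero_add]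
    _ = α • z + γ • ihTensorOne e z := by
      rw [hinr, hinl, hinl]
      refine Prod.ext ?_ ?_ <;> simp only [ihTensorOne_apply, Prod.fst_add, Prod.snd_add,
        Prod.smul_fst, Prod.smul_snd] <;> module

lemma coeffs_of_sq_eq_smul {V : Type*} [AddCommGroup V] [Module ℝ V] [Nontrivial V]
    {e α γ σ : ℝ} {T : Module.End ℝ (V × V)} (hT : ∀ z, T z = α • z + γ • ihTensorOne e z)
    (hsq : ∀ z, T (T z) = σ • z) :
    α ^ 2 - e * γ ^ 2 = σ ∧ α * γ = 0 := by
  obtain ⟨x, hx⟩ := exists_ne (0 : V)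
  have h := hsq (x, 0)
  simp only [hT, ihTensorOne_apply, Prod.smul_mk, Prod.mk_add_mk, smul_zero, add_zero, zero_add,
    Prod.mk.injEq, smul_smul, ← add_smul] at h
  constructor
  · exact smul_left_injective ℝ hx (by convert h.1 using 2; ring)
  · have h2 := (smul_eq_zero.1 h.2).resolve_right hx
    linarith

lemma eq_zero_and_eq_one_or_eq_neg_one {e α γ σ : ℝ} (he : e = 1 ∨ e = -1) (hσ : σ = 1 ∨ σ = -1)
    (h1 : α ^ 2 - e * γ ^ 2 = σ) (h2 : α * γ = 0) (hne : γ = 0 → α ≠ 1 ∧ α ≠ -1) :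
    α = 0 ∧ (γ = 1 ∨ γ = -1) := by
  by_cases hγ : γ = 0
  · subst hγ
    have hα : α ^ 2 = σ := by simpa using h1
    rcases hσ with rfl | rfl
    · exact absurd (sq_eq_one_iff.1 hα) (by simpa using hne rfl)
    · nlinarith
  · have hα : α = 0 := (mul_eq_zero.1 h2).resolve_right hγ
    subst hα
    have hγ2 : 0 < γ ^ 2 := by positivity
    refine ⟨rfl, sq_eq_one_iff.1 ?_⟩
    rcases he with rfl | rfl <;> rcases hσ with rfl | rfl <;> linarith

theorem invariant_complex_structure_unique
    (m : ℕ) (hm : 2 < m) (e : ℝ) (he : e = 1 ∨ e = -1)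
    (s : Fin m → ℝ) (hs : ∀ i, s i = 1 ∨ s i = -1)
    (T : ((Fin m → ℝ) × (Fin m → ℝ)) →ₗ[ℝ] ((Fin m → ℝ) × (Fin m → ℝ)))
    (hT : ∀ M ∈ SOH e, ∀ A ∈ SOV s, ∀ z, T (tact M A z) = tact M A (T z))
    (hsq : (∀ z, T (T z) = z) ∨ (∀ z, T (T z) = -z))
    (hne : T ≠ LinearMap.id) (hne' : T ≠ -LinearMap.id) :
    ((∀ z : (Fin m → ℝ) × (Fin m → ℝ), T z = ((-e) • z.2, z.1)) ∨
      (∀ z : (Fin m → ℝ) × (Fin m → ℝ), T z = (e • z.2, -z.1))) ∧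
    (∀ z, T (T z) = (-e) • z) := by
  obtain ⟨σ, hσ, hTT⟩ : ∃ σ : ℝ, (σ = 1 ∨ σ = -1) ∧ ∀ z, T (T z) = σ • z := by
    rcases hsq with h | h
    exacts [⟨1, .inl rfl, by simpa using h⟩, ⟨-1, .inr rfl, by simpa using h⟩]
  have hJ := map_ihTensorOne_of_SOH he T fun M hM => hT M hM 1 (one_mem_SOV s)
  obtain ⟨α, γ, hαγ⟩ := exists_eq_smul_add_smul_ihTensorOne hm hs e T
    (fun A hA => hT 1 (one_mem_SOH e) A hA) hJ
  have : Nonempty (Fin m) := ⟨⟨0, by omega⟩⟩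
  obtain ⟨h1, h2⟩ := coeffs_of_sq_eq_smul hαγ hTT
  obtain ⟨rfl, hγ⟩ := eq_zero_and_eq_one_or_eq_neg_one he hσ h1 h2 fun hγ => by
    subst hγ
    exact ⟨fun hα => hne (LinearMap.ext fun z => by simp [hαγ, hα]),
      fun hα => hne' (LinearMap.ext fun z => by simp [hαγ, hα])⟩
  refine ⟨?_, fun z => by rw [hTT, ← h1]; rcases hγ with rfl | rfl <;> norm_num⟩
  rcases hγ with rfl | rfl
  exacts [.inl fun z => by simp [hαγ], .inr fun z => by simp [hαγ]]
end
end

section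
/- In 𝔰𝔲_{n+1} (ε = 1) or 𝔰𝔲_{1,n} (ε = −1), the centralizer of the element h_1^ε = diag(I_2^ε, 0, ..., 0), where I_2^ε = [[0,−ε],[1,0]], is 𝔥^ε = ℝh_0 + ℝh_1^ε + 𝔰𝔲_{n-1}, where h_0 = diag(i, i, (−2i/(n−1))Id_{n−1}); in particular the center of 𝔥^ε is 2-dimensional, spanned by h_0 and h_1^ε. -/
/-!
STATEMENT 14: In 𝔰𝔲_{n+1} (ε = 1) or 𝔰𝔲_{1,n} (ε = −1) — the trace-free matrices X with
X*η + ηX = 0 for η = Id resp. η = diag(−1, Id_n) — the centralizer of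
h₁^ε = diag(I₂^ε, 0, …, 0), I₂^ε = [[0,−ε],[1,0]], is
𝔥^ε = ℝ h₀ + ℝ h₁^ε + 𝔰𝔲_{n−1},  h₀ = diag(i, i, (−2i/(n−1)) Id_{n−1}),
with 𝔰𝔲_{n−1} embedded in the lower-right block; in particular the center of 𝔥^ε is
2-dimensional, spanned by h₀ and h₁^ε.  (Here n ≥ 2; we write n = m + 2.)
-/

open Matrix Complex
open scoped BigOperators Matrix

noncomputable section

def etaM (m : ℕ) (e : ℝ) : Matrix (Fin (m + 3)) (Fin (m + 3)) ℂ :=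
  Matrix.diagonal (fun i => if i = 0 then (e : ℂ) else 1)

/-- 𝔰𝔲_{n+1} (e = 1) or 𝔰𝔲_{1,n} (e = −1), n = m+2. -/
def suL (m : ℕ) (e : ℝ) : Set (Matrix (Fin (m + 3)) (Fin (m + 3)) ℂ) :=
  {X | X.trace = 0 ∧ Xᴴ * etaM m e + etaM m e * X = 0}

/-- h₁^ε = diag(I₂^ε, 0, …, 0). -/
def h1M (m : ℕ) (e : ℝ) : Matrix (Fin (m + 3)) (Fin (m + 3)) ℂ :=
  fun i j => if i = 0 ∧ j = 1 then (-e : ℂ) else if i = 1 ∧ j = 0 then 1 else 0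

/-- h₀ = diag(i, i, (−2i/(n−1)) Id_{n−1}), n − 1 = m + 1. -/
def h0M (m : ℕ) : Matrix (Fin (m + 3)) (Fin (m + 3)) ℂ :=
  Matrix.diagonal (fun i => if (i : ℕ) < 2 then Complex.I
    else (-2 * Complex.I) / ((m : ℂ) + 1))

/-- The embedding of 𝔰𝔲_{n−1} into the lower-right (n−1)×(n−1) block. -/
def embSU (m : ℕ) (S : Matrix (Fin (m + 1)) (Fin (m + 1)) ℂ) :
    Matrix (Fin (m + 3)) (Fin (m + 3)) ℂ :=
  fun i j => if h : 2 ≤ (i : ℕ) ∧ 2 ≤ (j : ℕ)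
    then S ⟨(i : ℕ) - 2, by have := i.isLt; omega⟩ ⟨(j : ℕ) - 2, by have := j.isLt; omega⟩
    else 0

/-!
Commuting with h₁ forces X to be block diagonal, with upper 2×2 block x·Id + y·I₂^ε. The
η-skewness makes x imaginary and y real, so X − (Im x)·h₀ − y·h₁ lives in the lower block,
where it is a traceless anti-Hermitian matrix. An element of the center of 𝔥^ε also commutes
with this embedded 𝔰𝔲_{n−1}, whose center is trivial: the complex span of 𝔰𝔲_{n−1} contains every
off-diagonal matrix unit, and only scalars commute with all of those.
-/

namespace Matrix

variable {n : Type*} [Fintype n] [DecidableEq n]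

theorem commute_single_of_forall_commute_skewHermitian_traceless {S : Matrix n n ℂ}
    (hS : ∀ T : Matrix n n ℂ, Tᴴ = -T → T.trace = 0 → Commute S T) {p q : n} (hpq : p ≠ q) :
    Commute (single p q 1) S := by
  set T₁ : Matrix n n ℂ := single p q 1 - single q p 1
  set T₂ : Matrix n n ℂ := single p q I + single q p I
  have h₁ : Commute S T₁ := hS T₁ (by simp [T₁, conjTranspose_single])
    (by simp [T₁, trace_single_eq_of_ne _ _ _ hpq, trace_single_eq_of_ne _ _ _ hpq.symm])
  have h₂ : Commute S T₂ := hS T₂ (by simp [T₂, conjTranspose_single, single_neg, add_comm])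
    (by simp [T₂, trace_single_eq_of_ne _ _ _ hpq, trace_single_eq_of_ne _ _ _ hpq.symm])
  have hE : single p q (1 : ℂ) = (2 : ℂ)⁻¹ • (T₁ - I • T₂) := by
    simp only [T₁, T₂, smul_add, smul_single, smul_eq_mul, I_mul_I, ← single_neg]
    module
  rw [hE]
  exact ((h₁.sub_right (h₂.smul_right _)).smul_right _).symm

theorem eq_zero_of_forall_commute_skewHermitian_traceless {S : Matrix n n ℂ} (htr : S.trace = 0)
    (hS : ∀ T : Matrix n n ℂ, Tᴴ = -T → T.trace = 0 → Commute S T) : S = 0 := by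
  obtain ⟨r, rfl⟩ := mem_range_scalar_of_commute_single fun p q hpq =>
    commute_single_of_forall_commute_skewHermitian_traceless hS hpq
  cases isEmpty_or_nonempty n
  · exact Subsingleton.elim _ _
  · have hr : (Fintype.card n : ℂ) * r = 0 := by simpa using htr
    simp [(mul_eq_zero.mp hr).resolve_left (by simp)]

end Matrix

section BlockIndices

variable {m : ℕ}

abbrev lowerIdx (k : Fin (m + 1)) : Fin (m + 3) := k.succ.succ

theorem eq_zero_or_eq_one_or_exists_lowerIdx (i : Fin (m + 3)) :
    i = 0 ∨ i = 1 ∨ ∃ k : Fin (m + 1), i = lowerIdx k := by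
  rcases i with ⟨_ | _ | k, hk⟩
  · exact Or.inl rfl
  · exact Or.inr (Or.inl rfl)
  · exact Or.inr (Or.inr ⟨⟨k, by omega⟩, rfl⟩)

@[simp] theorem lowerIdx_ne_one (k : Fin (m + 1)) : lowerIdx k ≠ 1 := Fin.succ_succ_ne_one _
@[simp] theorem zero_ne_lowerIdx (k : Fin (m + 1)) : 0 ≠ lowerIdx k := (Fin.succ_ne_zero _).symm
@[simp] theorem one_ne_lowerIdx (k : Fin (m + 1)) : 1 ≠ lowerIdx k := (lowerIdx_ne_one k).symm

theorem trace_eq_add_add_sum_lowerIdx {α : Type*} [AddCommMonoid α]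
    (X : Matrix (Fin (m + 3)) (Fin (m + 3)) α) :
    X.trace = X 0 0 + X 1 1 + ∑ k : Fin (m + 1), X (lowerIdx k) (lowerIdx k) := by
  rw [trace, Fin.sum_univ_succ, Fin.sum_univ_succ, ← add_assoc]
  rfl

end BlockIndices

section Entries

variable {m : ℕ} (e : ℝ)

@[simp] theorem h1M_zero_one : h1M m e 0 1 = -e := by simp [h1M]
@[simp] theorem h1M_one_zero : h1M m e 1 0 = 1 := by simp [h1M]
@[simp] theorem h1M_zero_zero : h1M m e 0 0 = 0 := by simp [h1M]
@[simp] theorem h1M_one_one : h1M m e 1 1 = 0 := by simp [h1M]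
@[simp] theorem h1M_lowerIdx_left (k : Fin (m + 1)) (j) : h1M m e (lowerIdx k) j = 0 := by
  simp [h1M]
@[simp] theorem h1M_lowerIdx_right (k : Fin (m + 1)) (i) : h1M m e i (lowerIdx k) = 0 := by
  simp [h1M]

@[simp] theorem mul_h1M_apply_zero (X : Matrix (Fin (m + 3)) (Fin (m + 3)) ℂ) (i) :
    (X * h1M m e) i 0 = X i 1 := by simp [mul_apply, Fin.sum_univ_succ]
@[simp] theorem mul_h1M_apply_one (X : Matrix (Fin (m + 3)) (Fin (m + 3)) ℂ) (i) :
    (X * h1M m e) i 1 = -e * X i 0 := by simp [mul_apply, Fin.sum_univ_succ, mul_comm]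
@[simp] theorem mul_h1M_apply_lowerIdx (X : Matrix (Fin (m + 3)) (Fin (m + 3)) ℂ) (i k) :
    (X * h1M m e) i (lowerIdx k) = 0 := by simp [mul_apply]
@[simp] theorem h1M_mul_apply_zero (X : Matrix (Fin (m + 3)) (Fin (m + 3)) ℂ) (j) :
    (h1M m e * X) 0 j = -e * X 1 j := by simp [mul_apply, Fin.sum_univ_succ]
@[simp] theorem h1M_mul_apply_one (X : Matrix (Fin (m + 3)) (Fin (m + 3)) ℂ) (j) :
    (h1M m e * X) 1 j = X 0 j := by simp [mul_apply, Fin.sum_univ_succ]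
@[simp] theorem h1M_mul_apply_lowerIdx (X : Matrix (Fin (m + 3)) (Fin (m + 3)) ℂ) (k j) :
    (h1M m e * X) (lowerIdx k) j = 0 := by simp [mul_apply]

@[simp] theorem h0M_zero_zero : h0M m 0 0 = I := by simp [h0M]
@[simp] theorem h0M_one_one : h0M m 1 1 = I := by simp [h0M]
@[simp] theorem h0M_lowerIdx_lowerIdx (k : Fin (m + 1)) :
    h0M m (lowerIdx k) (lowerIdx k) = -2 * I / (m + 1) := by simp [h0M]
@[simp] theorem h0M_of_ne {i j : Fin (m + 3)} (h : i ≠ j) : h0M m i j = 0 := by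
  simp [h0M, diagonal_apply_ne _ h]

variable (S : Matrix (Fin (m + 1)) (Fin (m + 1)) ℂ)

@[simp] theorem embSU_lowerIdx_lowerIdx (k l : Fin (m + 1)) :
    embSU m S (lowerIdx k) (lowerIdx l) = S k l := by
  simp [embSU]
@[simp] theorem embSU_zero_left (j) : embSU m S 0 j = 0 := by simp [embSU]
@[simp] theorem embSU_one_left (j) : embSU m S 1 j = 0 := by simp [embSU]
@[simp] theorem embSU_zero_right (i) : embSU m S i 0 = 0 := by simp [embSU]
@[simp] theorem embSU_one_right (i) : embSU m S i 1 = 0 := by simp [embSU]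

end Entries

section Algebra

variable {m : ℕ} {e : ℝ}

theorem trace_h0M : (h0M m).trace = 0 := by
  rw [trace_eq_add_add_sum_lowerIdx]
  simp
  field_simp
  ring

theorem trace_h1M : (h1M m e).trace = 0 := by simp [trace_eq_add_add_sum_lowerIdx]

@[simp] theorem trace_embSU (S : Matrix (Fin (m + 1)) (Fin (m + 1)) ℂ) :
    (embSU m S).trace = S.trace := by
  rw [trace_eq_add_add_sum_lowerIdx]
  simp [trace]

theorem embSU_injective : Function.Injective (embSU m) := fun S T h => by
  ext k l
  simpa using congrFun (congrFun h (lowerIdx k)) (lowerIdx l)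

@[simp] theorem embSU_zero : embSU m 0 = 0 := by
  ext i j
  simp [embSU]

theorem embSU_add (S T : Matrix (Fin (m + 1)) (Fin (m + 1)) ℂ) :
    embSU m (S + T) = embSU m S + embSU m T := by
  ext i j
  rcases eq_zero_or_eq_one_or_exists_lowerIdx i with rfl | rfl | ⟨k, rfl⟩ <;>
  rcases eq_zero_or_eq_one_or_exists_lowerIdx j with rfl | rfl | ⟨l, rfl⟩ <;>
  simp

theorem embSU_mul_embSU (S T : Matrix (Fin (m + 1)) (Fin (m + 1)) ℂ) :
    embSU m S * embSU m T = embSU m (S * T) := by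
  ext i j
  rcases eq_zero_or_eq_one_or_exists_lowerIdx i with rfl | rfl | ⟨k, rfl⟩ <;>
  rcases eq_zero_or_eq_one_or_exists_lowerIdx j with rfl | rfl | ⟨l, rfl⟩ <;>
  simp [mul_apply, Fin.sum_univ_succ]

theorem conjTranspose_embSU (S : Matrix (Fin (m + 1)) (Fin (m + 1)) ℂ) :
    (embSU m S)ᴴ = embSU m Sᴴ := by
  ext i j
  rcases eq_zero_or_eq_one_or_exists_lowerIdx i with rfl | rfl | ⟨k, rfl⟩ <;>
  rcases eq_zero_or_eq_one_or_exists_lowerIdx j with rfl | rfl | ⟨l, rfl⟩ <;>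
  simp

theorem etaM_mul_embSU (S : Matrix (Fin (m + 1)) (Fin (m + 1)) ℂ) :
    etaM m e * embSU m S = embSU m S := by
  ext i j
  rcases eq_zero_or_eq_one_or_exists_lowerIdx i with rfl | rfl | ⟨k, rfl⟩ <;>
  simp [etaM]

theorem embSU_mul_etaM (S : Matrix (Fin (m + 1)) (Fin (m + 1)) ℂ) :
    embSU m S * etaM m e = embSU m S := by
  ext i j
  rcases eq_zero_or_eq_one_or_exists_lowerIdx j with rfl | rfl | ⟨l, rfl⟩ <;>
  simp [etaM]

theorem commute_h0M_h1M : Commute (h0M m) (h1M m e) := by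
  ext i j
  rcases eq_zero_or_eq_one_or_exists_lowerIdx i with rfl | rfl | ⟨k, rfl⟩ <;>
  rcases eq_zero_or_eq_one_or_exists_lowerIdx j with rfl | rfl | ⟨l, rfl⟩ <;>
  simp [mul_comm]

theorem commute_h0M_embSU (S : Matrix (Fin (m + 1)) (Fin (m + 1)) ℂ) :
    Commute (h0M m) (embSU m S) := by
  ext i j
  rcases eq_zero_or_eq_one_or_exists_lowerIdx i with rfl | rfl | ⟨k, rfl⟩ <;>
  rcases eq_zero_or_eq_one_or_exists_lowerIdx j with rfl | rfl | ⟨l, rfl⟩ <;>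
  simp [h0M, mul_comm]

theorem h1M_mul_embSU (S : Matrix (Fin (m + 1)) (Fin (m + 1)) ℂ) :
    h1M m e * embSU m S = 0 := by
  ext i j
  rcases eq_zero_or_eq_one_or_exists_lowerIdx i with rfl | rfl | ⟨k, rfl⟩ <;> simp

theorem embSU_mul_h1M (S : Matrix (Fin (m + 1)) (Fin (m + 1)) ℂ) :
    embSU m S * h1M m e = 0 := by
  ext i j
  rcases eq_zero_or_eq_one_or_exists_lowerIdx j with rfl | rfl | ⟨l, rfl⟩ <;> simp

theorem commute_h1M_embSU (S : Matrix (Fin (m + 1)) (Fin (m + 1)) ℂ) :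
    Commute (h1M m e) (embSU m S) :=
  (h1M_mul_embSU S).trans (embSU_mul_h1M S).symm

end Algebra

section SpecialUnitary

variable {m : ℕ} {e : ℝ}

theorem add_mem_suL {X Y : Matrix (Fin (m + 3)) (Fin (m + 3)) ℂ} (hX : X ∈ suL m e)
    (hY : Y ∈ suL m e) : X + Y ∈ suL m e := by
  refine ⟨by rw [trace_add, hX.1, hY.1, add_zero], ?_⟩
  calc (X + Y)ᴴ * etaM m e + etaM m e * (X + Y)
      = (Xᴴ * etaM m e + etaM m e * X) + (Yᴴ * etaM m e + etaM m e * Y) := by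
        rw [conjTranspose_add, add_mul, mul_add]
        abel
    _ = 0 := by rw [hX.2, hY.2, add_zero]

theorem ofReal_smul_mem_suL {X : Matrix (Fin (m + 3)) (Fin (m + 3)) ℂ} (r : ℝ)
    (hX : X ∈ suL m e) : (r : ℂ) • X ∈ suL m e := by
  refine ⟨by rw [trace_smul, hX.1, smul_zero], ?_⟩
  rw [conjTranspose_smul, star_def, conj_ofReal, smul_mul_assoc, mul_smul_comm, ← smul_add,
    hX.2, smul_zero]

theorem sub_mem_suL {X Y : Matrix (Fin (m + 3)) (Fin (m + 3)) ℂ} (hX : X ∈ suL m e)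
    (hY : Y ∈ suL m e) : X - Y ∈ suL m e := by
  simpa [sub_eq_add_neg] using add_mem_suL hX (ofReal_smul_mem_suL (-1) hY)

theorem h0M_mem_suL : h0M m ∈ suL m e := by
  have hskew : (h0M m)ᴴ = -h0M m := by
    ext i j
    rcases eq_or_ne i j with rfl | hij
    · simp only [h0M, conjTranspose_apply, diagonal_apply_eq, Matrix.neg_apply]
      split_ifs <;> simp [neg_div]
    · simp [h0M_of_ne hij, h0M_of_ne hij.symm, conjTranspose_apply]
  have hcomm : Commute (h0M m) (etaM m e) := commute_diagonal _ _
  refine ⟨trace_h0M, ?_⟩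
  rw [hskew, neg_mul, hcomm.eq, neg_add_cancel]

theorem h1M_mem_suL (he : e ^ 2 = 1) : h1M m e ∈ suL m e := by
  have he' : (e : ℂ) ^ 2 = 1 := by exact_mod_cast he
  refine ⟨trace_h1M, ?_⟩
  ext i j
  rcases eq_zero_or_eq_one_or_exists_lowerIdx i with rfl | rfl | ⟨k, rfl⟩ <;>
  rcases eq_zero_or_eq_one_or_exists_lowerIdx j with rfl | rfl | ⟨l, rfl⟩ <;>
  simp [etaM, conjTranspose_apply] <;> linear_combination -he'

theorem embSU_mem_suL_iff {S : Matrix (Fin (m + 1)) (Fin (m + 1)) ℂ} :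
    embSU m S ∈ suL m e ↔ S.trace = 0 ∧ Sᴴ = -S := by
  have hskew : (embSU m S)ᴴ * etaM m e + etaM m e * embSU m S = embSU m (Sᴴ + S) := by
    rw [conjTranspose_embSU, embSU_mul_etaM, etaM_mul_embSU, embSU_add]
  rw [suL, Set.mem_ofPred_eq, trace_embSU, hskew, embSU_injective.eq_iff' embSU_zero,
    add_eq_zero_iff_eq_neg]

end SpecialUnitary

section Centralizer

variable {m : ℕ} {e : ℝ}

theorem commute_smul_h0M_add_smul_h1M (a b : ℂ) {Y : Matrix (Fin (m + 3)) (Fin (m + 3)) ℂ}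
    (h₀ : Commute (h0M m) Y) (h₁ : Commute (h1M m e) Y) :
    Commute (a • h0M m + b • h1M m e) Y :=
  (h₀.smul_left a).add_left (h₁.smul_left b)

theorem commute_smul_h0M_add_smul_h1M_of_mem (a b a' b' : ℂ)
    (S : Matrix (Fin (m + 1)) (Fin (m + 1)) ℂ) :
    Commute (a • h0M m + b • h1M m e) (a' • h0M m + b' • h1M m e + embSU m S) :=
  commute_smul_h0M_add_smul_h1M a b
    ((((Commute.refl _).smul_right a').add_right (commute_h0M_h1M.smul_right b')).add_right
      (commute_h0M_embSU S))
    (((commute_h0M_h1M.symm.smul_right a').add_right ((Commute.refl _).smul_right b')).add_right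
      (commute_h1M_embSU S))

theorem eq_embSU_submatrix_of_commute_h1M (he : e ≠ 0)
    {X : Matrix (Fin (m + 3)) (Fin (m + 3)) ℂ} (hX : Commute X (h1M m e)) (h00 : X 0 0 = 0)
    (h10 : X 1 0 = 0) : X = embSU m (X.submatrix lowerIdx lowerIdx) := by
  have hX' (i j : Fin (m + 3)) : (X * h1M m e) i j = (h1M m e * X) i j := by rw [hX.eq]
  have he' : (e : ℂ) ≠ 0 := ofReal_ne_zero.mpr he
  ext i j
  rcases eq_zero_or_eq_one_or_exists_lowerIdx i with rfl | rfl | ⟨k, rfl⟩ <;>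
  rcases eq_zero_or_eq_one_or_exists_lowerIdx j with rfl | rfl | ⟨l, rfl⟩
  · simpa using h00
  · simpa [h10] using hX' 0 0
  · simpa using (hX' 1 (lowerIdx l)).symm
  · simpa using h10
  · simpa [h00] using hX' 1 0
  · simpa [he'] using hX' 0 (lowerIdx l)
  · simpa [he'] using hX' (lowerIdx k) 1
  · simpa using hX' (lowerIdx k) 0
  · simp

theorem exists_eq_of_mem_suL_of_commute_h1M (he : e ^ 2 = 1)
    {X : Matrix (Fin (m + 3)) (Fin (m + 3)) ℂ} (hX : X ∈ suL m e) (hXc : Commute X (h1M m e)) :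
    ∃ (a b : ℝ) (S : Matrix (Fin (m + 1)) (Fin (m + 1)) ℂ),
      Sᴴ = -S ∧ S.trace = 0 ∧ X = (a : ℂ) • h0M m + (b : ℂ) • h1M m e + embSU m S := by
  have he0 : e ≠ 0 := by rintro rfl; norm_num at he
  have hskew (i j : Fin (m + 3)) := congrFun (congrFun hX.2 i) j
  have h01 : X 0 1 = -e * X 1 0 := by simpa using congrFun (congrFun hXc.eq 0) 0
  have hre : (X 0 0).re = 0 := by
    have := congrArg re (hskew 0 0)
    simp [etaM, conjTranspose_apply] at this
    exact (mul_eq_zero.mp (by linarith : e * (X 0 0).re = 0)).resolve_left he0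
  have him : (X 1 0).im = 0 := by
    have := congrArg im (hskew 0 1)
    simp [etaM, conjTranspose_apply, h01] at this
    nlinarith
  set Z := ((X 0 0).im : ℂ) • h0M m + ((X 1 0).re : ℂ) • h1M m e
  have hZ : Z ∈ suL m e :=
    add_mem_suL (ofReal_smul_mem_suL _ h0M_mem_suL) (ofReal_smul_mem_suL _ (h1M_mem_suL he))
  have hY : X - Z ∈ suL m e := sub_mem_suL hX hZ
  have hYc : Commute (X - Z) (h1M m e) :=
    hXc.sub_left (commute_smul_h0M_add_smul_h1M _ _ commute_h0M_h1M (Commute.refl _))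
  have hYS := eq_embSU_submatrix_of_commute_h1M he0 hYc
    (by apply Complex.ext <;> simp [Z, hre]) (by apply Complex.ext <;> simp [Z, him])
  obtain ⟨htr, hS⟩ := embSU_mem_suL_iff.mp (hYS ▸ hY)
  exact ⟨_, _, _, hS, htr, by rw [← hYS, add_sub_cancel]⟩

theorem commute_of_commute_embSU {a b : ℂ} {S T : Matrix (Fin (m + 1)) (Fin (m + 1)) ℂ}
    (h : Commute (a • h0M m + b • h1M m e + embSU m S) (embSU m T)) : Commute S T := by
  have hST : Commute (embSU m S) (embSU m T) := by
    simpa using h.sub_left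
      (commute_smul_h0M_add_smul_h1M a b (commute_h0M_embSU T) (commute_h1M_embSU (e := e) T))
  exact embSU_injective (by rw [← embSU_mul_embSU, ← embSU_mul_embSU]; exact hST.eq)

end Centralizer

theorem centralizer_of_h1 (m : ℕ) (e : ℝ) (he : e = 1 ∨ e = -1)
    (X : Matrix (Fin (m + 3)) (Fin (m + 3)) ℂ) :
    -- the centralizer of h₁^ε in 𝔤^ε is ℝh₀ + ℝh₁^ε + 𝔰𝔲_{n−1}
    ((X ∈ suL m e ∧ X * h1M m e = h1M m e * X) ↔
      ∃ (a b : ℝ) (S : Matrix (Fin (m + 1)) (Fin (m + 1)) ℂ),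
        Sᴴ = -S ∧ S.trace = 0 ∧
        X = (a : ℂ) • h0M m + (b : ℂ) • h1M m e + embSU m S) ∧
    -- the center of 𝔥^ε is spanned by h₀ and h₁^ε
    ((X ∈ suL m e ∧ X * h1M m e = h1M m e * X ∧
        ∀ Y, (Y ∈ suL m e ∧ Y * h1M m e = h1M m e * Y) → X * Y = Y * X) ↔
      ∃ a b : ℝ, X = (a : ℂ) • h0M m + (b : ℂ) • h1M m e) := by
  have he2 : e ^ 2 = 1 := by rcases he with rfl | rfl <;> norm_num
  have hcent (Y : Matrix (Fin (m + 3)) (Fin (m + 3)) ℂ) :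
      (Y ∈ suL m e ∧ Commute Y (h1M m e)) ↔ ∃ (a b : ℝ) (S : Matrix (Fin (m + 1)) (Fin (m + 1)) ℂ),
        Sᴴ = -S ∧ S.trace = 0 ∧ Y = (a : ℂ) • h0M m + (b : ℂ) • h1M m e + embSU m S := by
    refine ⟨fun hY => exists_eq_of_mem_suL_of_commute_h1M he2 hY.1 hY.2, ?_⟩
    rintro ⟨a, b, S, hS, htr, rfl⟩
    exact ⟨add_mem_suL (add_mem_suL (ofReal_smul_mem_suL a h0M_mem_suL)
        (ofReal_smul_mem_suL b (h1M_mem_suL he2))) (embSU_mem_suL_iff.mpr ⟨htr, hS⟩),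
      (commute_smul_h0M_add_smul_h1M _ _ commute_h0M_h1M (Commute.refl _)).add_left
        (commute_h1M_embSU S).symm⟩
  refine ⟨hcent X, ⟨?_, ?_⟩⟩
  · rintro ⟨hX, hXc, hXY⟩
    obtain ⟨a, b, S, -, htr, rfl⟩ := (hcent _).mp ⟨hX, hXc⟩
    have hS : S = 0 := Matrix.eq_zero_of_forall_commute_skewHermitian_traceless htr
      fun T hT htrT => commute_of_commute_embSU
        (hXY _ ⟨embSU_mem_suL_iff.mpr ⟨htrT, hT⟩, (commute_h1M_embSU T).symm⟩)
    exact ⟨a, b, by rw [hS, embSU_zero, add_zero]⟩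
  · rintro ⟨a, b, rfl⟩
    obtain ⟨hX, hXc⟩ := (hcent _).mpr ⟨a, b, 0, by simp, by simp, by rw [embSU_zero, add_zero]⟩
    refine ⟨hX, hXc, fun Y hY => ?_⟩
    obtain ⟨a', b', S', -, -, rfl⟩ := (hcent Y).mp hY
    exact commute_smul_h0M_add_smul_h1M_of_mem _ _ _ _ S'
end
end
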